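/- Let ℐ ⊆ ℕ be finite and nonempty, let τ ∈ ∏_{i∈ℐ}[2^i], and let A = [τ] = {f ∈ 𝒯 : ∀ i ∈ ℐ, f(i) = τ(i)}. If {X_i : i ∈ I} is a finite family of 𝒟-sets that is a proper cover of A and X_i^Ind ∖ ℐ ≠ ∅ for every i ∈ I, then the family {⋂_{l ∈ X_i^Ind∖ℐ} S_{l, X_i(l)} : i ∈ I} is a proper cover of 𝒯. -/
import Mathlib


noncomputable section

/-- 𝒯 = ∏_{n∈ℕ} [2^n]  (the paper's index `n ∈ {1,2,…}` is the Lean index `n+1`). -/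
abbrev Tal : Type := (n : ℕ) → Fin (2 ^ (n + 1))

/-- `S_{n,τ} = {f ∈ 𝒯 : f(n) ≠ τ}`. -/
def Sset (n : ℕ) (τ : Fin (2 ^ (n + 1))) : Set Tal := {f | f n ≠ τ}

/-- The 𝒟-set `⋂_{n ∈ I} S_{n, t n}` with (nonempty, finite) index set `I`;
only the values of `t` on `I` matter. -/
def DSet (I : Finset ℕ) (t : (n : ℕ) → Fin (2 ^ (n + 1))) : Set Tal :=
  {f | ∀ n ∈ I, f n ≠ t n}

/-- `η(k) = 2^{2500 k⁴}`. -/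
def ηT (k : ℕ) : ℕ := 2 ^ (2500 * k ^ 4)

/-- `α(k) = (k+5)^{-3}`. -/
def αT (k : ℕ) : ℝ := (((k : ℝ) + 5) ^ 3)⁻¹

/-- `δ(m) = min {n ∈ ℕ : η(n) ≥ m}` (with `ℕ = {1,2,…}`). -/
def δT (m : ℕ) : ℕ := sInf {n : ℕ | 1 ≤ n ∧ m ≤ ηT n}

/-- `w(n) = 2^{-δ(n)} (η(δ(n))/n)^{α(δ(n))}`. -/
def wT (n : ℕ) : ℝ :=
  (2 : ℝ) ^ (-(δT n : ℤ)) * ((ηT (δT n) : ℝ) / (n : ℝ)) ^ (αT (δT n))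

/-- Membership in Talagrand's family 𝒟 for a triple `(X, I, w)`:  for some `k ∈ {1,2,…}`,
`X` is a 𝒟-set with index set `I`, `1 ≤ |I| ≤ η(k)`, and `w = 2^{-k}(η(k)/|I|)^{α(k)}`. -/
def memD (p : Set Tal × Finset ℕ × ℝ) : Prop :=
  ∃ k : ℕ, 1 ≤ k ∧ (∃ t : (n : ℕ) → Fin (2 ^ (n + 1)), p.1 = DSet p.2.1 t) ∧
    p.2.1.Nonempty ∧ p.2.1.card ≤ ηT k ∧
    p.2.2 = (2 : ℝ) ^ (-(k : ℤ)) * ((ηT k : ℝ) / (p.2.1.card : ℝ)) ^ (αT k)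

/-- Talagrand's first pathological submeasure:
`ψ(B) = inf { w(Y) : Y ⊆ 𝒟 finite, B ⊆ ⋃ Y }`. -/
def ψT (B : Set Tal) : ℝ :=
  sInf {r : ℝ | ∃ Y : Finset (Set Tal × Finset ℕ × ℝ), (∀ p ∈ Y, memD p) ∧
    B ⊆ (⋃ p ∈ Y, p.1) ∧ r = ∑ p ∈ Y, p.2.2}

end

/-- If a finite family of distinct 𝒟-sets `X i = DSet (Ind i) (t i)` is a
proper cover of `A = [τ]` and `Ind i ∖ ℐ ≠ ∅` for every `i`, then the derived family
`⋂_{l ∈ Ind i ∖ ℐ} S_{l, tᵢ(l)}` is a proper cover of 𝒯. -/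
theorem statement11 (ℐ : Finset ℕ) (hℐ : ℐ.Nonempty)
    (τ : (n : ℕ) → Fin (2 ^ (n + 1)))
    (M : ℕ)
    (Ind : Fin M → Finset ℕ) (t : Fin M → (n : ℕ) → Fin (2 ^ (n + 1)))
    (hne : ∀ i, (Ind i).Nonempty)
    (hdistinct : Function.Injective (fun i : Fin M => DSet (Ind i) (t i)))
    (hcover : {f : Tal | ∀ i ∈ ℐ, f i = τ i} ⊆ ⋃ i : Fin M, DSet (Ind i) (t i))
    (hproper : ∀ s : Finset (Fin M), s ≠ Finset.univ →
      ¬ ({f : Tal | ∀ i ∈ ℐ, f i = τ i} ⊆ ⋃ i ∈ s, DSet (Ind i) (t i)))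
    (hdiffne : ∀ i, (Ind i \ ℐ).Nonempty) :
    (Set.univ ⊆ ⋃ i : Fin M, DSet (Ind i \ ℐ) (t i)) ∧
      ∀ s : Finset (Fin M), s ≠ Finset.univ →
        ¬ (Set.univ ⊆ ⋃ i ∈ s, DSet (Ind i \ ℐ) (t i)) := by

  classical
  -- Key: for every `i` and every `n ∈ Ind i ∩ ℐ`, `t i n ≠ τ n`.
  have hkey : ∀ i : Fin M, ∀ n ∈ Ind i, n ∈ ℐ → t i n ≠ τ n := by
    intro i n hn hnI heq
    apply hproper (Finset.univ.erase i)
    · have hi : i ∉ Finset.univ.erase i := Finset.notMem_erase i _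
      intro h; rw [h] at hi; exact hi (Finset.mem_univ i)
    · intro f hf
      obtain ⟨_, ⟨j, rfl⟩, hj⟩ := hcover hf
      have hji : j ≠ i := by
        rintro rfl
        exact hj n hn ((hf n hnI).trans heq.symm)
      exact Set.mem_biUnion (Finset.mem_erase.mpr ⟨hji, Finset.mem_univ j⟩) hj
  constructor
  · intro f _
    set g : Tal := fun n => if n ∈ ℐ then τ n else f n with hg
    have hgA : g ∈ {f : Tal | ∀ i ∈ ℐ, f i = τ i} := by
      intro n hn; simp [hg, hn]
    obtain ⟨_, ⟨j, rfl⟩, hj⟩ := hcover hgA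
    refine Set.mem_iUnion.mpr ⟨j, ?_⟩
    intro n hn
    have hn' := Finset.mem_sdiff.mp hn
    have := hj n hn'.1
    simpa [hg, hn'.2] using this
  · intro s hs hsub
    apply hproper s hs
    intro f hf
    have hmem := hsub (Set.mem_univ f)
    rw [Set.mem_iUnion₂] at hmem
    obtain ⟨j, hjs, hj⟩ := hmem
    refine Set.mem_biUnion hjs ?_
    intro n hn
    by_cases hnI : n ∈ ℐ
    · rw [hf n hnI]
      exact fun h => hkey j n hn hnI h.symm
    · exact hj n (Finset.mem_sdiff.mpr ⟨hn, hnI⟩)
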